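/- Taylor-correction operator accuracy: for φ ∈ C⁴ compactly supported in Ω, define (Q_hφ)_j := φ_j + (h/2)∂φ_j/∂x_j + (h²/12)∂²φ_j/∂x_j². If ∇·φ = 0, then there exists a constant β > 0 (depending on φ) such that the discrete backward divergence of Q_hφ evaluated at any grid point x ∈ Ω_h satisfies |𝒟·(Q_hφ)(x)| ≤ β h³. -/

import Mathlib

/-! Along the line `t ↦ y + t • eⱼ`, Taylor expansions of `φⱼ`, `∂ⱼφⱼ` and `∂ⱼ²φⱼ` about `y`
with Lagrange remainders show that the backward difference quotient of `(Q_hφ)ⱼ` equals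
`∂ⱼφⱼ(y) + O(h³)`: the weights `1/2` and `1/12` are exactly those that cancel the `h` and `h²`
terms. The constant is a bound for the compactly supported `∂ⱼ⁴φⱼ`. Summing over `j`, the
divergence `∑ⱼ ∂ⱼφⱼ(y)` vanishes. -/

open Finset

/-- The Taylor-correction operator
`(Q_hφ)_j = φ_j + (h/2)∂_jφ_j + (h²/12)∂_j²φ_j`. -/
noncomputable def Qh (h : ℝ) (φ : (Fin 3 → ℝ) → Fin 3 → ℝ)
    (y : Fin 3 → ℝ) : Fin 3 → ℝ :=
  fun j =>
    φ y j + (h / 2) * fderiv ℝ (fun z => φ z j) y (Pi.single j 1)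
      + (h ^ 2 / 12) *
          fderiv ℝ (fun z => fderiv ℝ (fun w => φ w j) z (Pi.single j 1)) y
            (Pi.single j 1)

open scoped Nat in
theorem exists_taylor_lagrange_iterate_deriv {f : ℝ → ℝ} {n : ℕ}
    (hf : ContDiff ℝ (n + 1) f) (x s : ℝ) :
    ∃ ξ, f (x + s) = ∑ k ∈ range (n + 1), deriv^[k] f x * s ^ k / k !
      + deriv^[n + 1] f ξ * s ^ (n + 1) / (n + 1)! := by
  rcases eq_or_ne s 0 with rfl | hs
  · refine ⟨x, ?_⟩
    simp [sum_range_succ']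
  · obtain ⟨ξ, -, hξ⟩ := taylor_mean_remainder_lagrange_iteratedDeriv
      (by simpa using hs : x ≠ x + s) hf.contDiffOn
    have hwithin : ∀ k ≤ n, iteratedDerivWithin k f (Set.uIcc x (x + s)) x = deriv^[k] f x :=
      fun k hk => by
        rw [iteratedDerivWithin_eq_iteratedDeriv (uniqueDiffOn_uIcc (by simpa using hs))
          (hf.of_le (by exact_mod_cast hk.trans n.le_succ)).contDiffAt Set.left_mem_uIcc,
          iteratedDeriv_eq_iterate]
    refine ⟨ξ, ?_⟩
    rw [taylor_within_apply, iteratedDeriv_eq_iterate, add_sub_cancel_left,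
      sub_eq_iff_eq_add'] at hξ
    rw [hξ, sum_congr rfl fun k hk => ?_]
    rw [hwithin k (Nat.lt_succ_iff.mp (mem_range.mp hk)), smul_eq_mul]
    ring

theorem abs_corrected_backward_difference_sub_deriv_le {f : ℝ → ℝ} (hf : ContDiff ℝ 4 f)
    {M : ℝ} (hM : ∀ t, |deriv^[4] f t| ≤ M) (x : ℝ) {h : ℝ} (hh : h ≠ 0) :
    |((f x + h / 2 * deriv f x + h ^ 2 / 12 * deriv (deriv f) x)
        - (f (x - h) + h / 2 * deriv f (x - h) + h ^ 2 / 12 * deriv (deriv f) (x - h))) / h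
      - deriv f x| ≤ M / 6 * |h| ^ 3 := by
  obtain ⟨ξ₀, e₀⟩ := exists_taylor_lagrange_iterate_deriv (n := 3) hf x (-h)
  obtain ⟨ξ₁, e₁⟩ := exists_taylor_lagrange_iterate_deriv (n := 2)
    (hf.iterate_deriv' 3 1) x (-h)
  obtain ⟨ξ₂, e₂⟩ := exists_taylor_lagrange_iterate_deriv (n := 1)
    (hf.iterate_deriv' 2 2) x (-h)
  simp only [sum_range_succ, sum_range_zero, ← Function.iterate_add_apply, ← sub_eq_add_neg]
    at e₀ e₁ e₂
  norm_num [Nat.factorial] at e₀ e₁ e₂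
  set f₄ := deriv (deriv (deriv (deriv f)))
  have hf₄ : ∀ t, |f₄ t| ≤ M := hM
  have key : ((f x + h / 2 * deriv f x + h ^ 2 / 12 * deriv (deriv f) x)
        - (f (x - h) + h / 2 * deriv f (x - h) + h ^ 2 / 12 * deriv (deriv f) (x - h))) / h
      - deriv f x = (f₄ ξ₁ / 12 - f₄ ξ₀ / 24 - f₄ ξ₂ / 24) * h ^ 3 := by
    rw [e₀, e₁, e₂]
    field_simp
    ring
  rw [key, abs_mul, abs_pow]
  gcongr
  obtain ⟨l₀, u₀⟩ := abs_le.mp (hf₄ ξ₀)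
  obtain ⟨l₁, u₁⟩ := abs_le.mp (hf₄ ξ₁)
  obtain ⟨l₂, u₂⟩ := abs_le.mp (hf₄ ξ₂)
  exact abs_le.mpr ⟨by linarith, by linarith⟩

section DirDeriv

variable {E F : Type*} [NormedAddCommGroup E] [NormedSpace ℝ E]
  [NormedAddCommGroup F] [NormedSpace ℝ F]

noncomputable def dirDeriv (v : E) (G : E → F) : E → F := fun z => fderiv ℝ G z v

theorem contDiff_dirDeriv {n : WithTop ℕ∞} {G : E → F} (hG : ContDiff ℝ (n + 1) G) (v : E) :
    ContDiff ℝ n (dirDeriv v G) :=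
  (hG.fderiv_right le_rfl).clm_apply contDiff_const

theorem ContDiff.iterate_dirDeriv' (v : E) (n : ℕ) :
    ∀ (k : ℕ) {G : E → F}, ContDiff ℝ (n + k : ℕ) G → ContDiff ℝ n ((dirDeriv v)^[k] G)
  | 0, _, hG => hG
  | k + 1, _, hG => ContDiff.iterate_dirDeriv' v n k (contDiff_dirDeriv hG v)

theorem HasCompactSupport.iterate_dirDeriv {G : E → F} (hG : HasCompactSupport G) (v : E) :
    ∀ k, HasCompactSupport ((dirDeriv v)^[k] G)
  | 0 => hG
  | k + 1 => by
    rw [Function.iterate_succ_apply']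
    exact (hG.iterate_dirDeriv v k).fderiv_apply ℝ v

theorem hasDerivAt_comp_line {G : E → F} {y v : E} {t : ℝ}
    (hG : DifferentiableAt ℝ G (y + t • v)) :
    HasDerivAt (fun s : ℝ => G (y + s • v)) (dirDeriv v G (y + t • v)) t := by
  have hline : HasDerivAt (fun s : ℝ => y + s • v) v t := by
    simpa using ((hasDerivAt_id t).smul_const v).const_add y
  exact hG.hasFDerivAt.comp_hasDerivAt t hline

theorem iterate_deriv_comp_line {n : ℕ} {G : E → F} (hG : ContDiff ℝ n G) (y v : E) :
    ∀ k ≤ n, deriv^[k] (fun t : ℝ => G (y + t • v)) = fun t => (dirDeriv v)^[k] G (y + t • v)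
  | 0, _ => rfl
  | k + 1, hk => by
    have hdiff : ContDiff ℝ (n - (k + 1) + 1 : ℕ) ((dirDeriv v)^[k] G) :=
      ContDiff.iterate_dirDeriv' v _ k (by rwa [show n - (k + 1) + 1 + k = n by omega])
    rw [Function.iterate_succ_apply', iterate_deriv_comp_line hG y v k (by omega),
      Function.iterate_succ_apply']
    funext t
    exact (hasDerivAt_comp_line ((hdiff.differentiable (by simp)) _)).deriv

noncomputable def taylorCorrection (h : ℝ) (v : E) (G : E → ℝ) : E → ℝ :=
  fun z => G z + h / 2 * dirDeriv v G z + h ^ 2 / 12 * dirDeriv v (dirDeriv v G) z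

theorem exists_abs_taylorCorrection_backward_difference_sub_dirDeriv_le {G : E → ℝ}
    (hG : ContDiff ℝ 4 G) (hsupp : HasCompactSupport G) (v : E) :
    ∃ C > 0, ∀ y : E, ∀ h ≠ 0,
      |(taylorCorrection h v G y - taylorCorrection h v G (y - h • v)) / h - dirDeriv v G y|
        ≤ C * |h| ^ 3 := by
  obtain ⟨M, hM⟩ := (hsupp.iterate_dirDeriv v 4).exists_bound_of_continuous
    (ContDiff.iterate_dirDeriv' v 0 4 hG).continuous
  refine ⟨max M 1 / 6, by positivity, fun y h hh => ?_⟩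
  have hline : ContDiff ℝ 4 (fun t : ℝ => G (y + t • v)) := by fun_prop
  have hderiv := iterate_deriv_comp_line (n := 4) hG y v
  have bound := abs_corrected_backward_difference_sub_deriv_le hline
    (fun t => by rw [hderiv 4 le_rfl]; exact (hM _).trans (le_max_left M 1)) 0 hh
  have h1 : deriv (fun t : ℝ => G (y + t • v)) = fun t => dirDeriv v G (y + t • v) :=
    hderiv 1 (by norm_num)
  have h2 : deriv (deriv fun t : ℝ => G (y + t • v))
      = fun t => dirDeriv v (dirDeriv v G) (y + t • v) :=
    hderiv 2 (by norm_num)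
  rw [h2, h1] at bound
  simpa [taylorCorrection, sub_eq_add_neg] using bound

end DirDeriv

/-- for a `C⁴` compactly supported divergence-free `φ`, the
discrete backward divergence of `Q_hφ` is `O(h³)` at every grid point,
uniformly in `h`. -/
theorem Qh_discrete_divergence_accuracy
    (φ : (Fin 3 → ℝ) → Fin 3 → ℝ)
    (hφ : ContDiff ℝ 4 φ) (hsupp : HasCompactSupport φ)
    (hdiv : ∀ y, ∑ j, fderiv ℝ (fun z => φ z j) y (Pi.single j 1) = 0) :
    ∃ β > (0 : ℝ), ∀ h : ℝ, 0 < h → ∀ x : Fin 3 → ℤ,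
      |∑ j, (Qh h φ (fun i => h * (x i : ℝ)) j
          - Qh h φ ((fun i => h * (x i : ℝ)) - h • (Pi.single j (1:ℝ) : Fin 3 → ℝ)) j) / h|
        ≤ β * h ^ 3 := by
  choose C hCpos hC using fun j : Fin 3 =>
    exists_abs_taylorCorrection_backward_difference_sub_dirDeriv_le (contDiff_pi.mp hφ j)
      (hsupp.comp_left (g := fun w : Fin 3 → ℝ => w j) rfl) (Pi.single j 1)
  refine ⟨∑ j, C j, sum_pos (fun j _ => hCpos j) univ_nonempty,
    fun h hh x => ?_⟩
  set y : Fin 3 → ℝ := fun i => h * (x i : ℝ)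
  calc |∑ j, (Qh h φ y j - Qh h φ (y - h • Pi.single j 1) j) / h|
      = |∑ j, ((Qh h φ y j - Qh h φ (y - h • Pi.single j 1) j) / h
          - fderiv ℝ (fun z => φ z j) y (Pi.single j 1))| := by
        rw [sum_sub_distrib, hdiv y, sub_zero]
    _ ≤ ∑ j, C j * |h| ^ 3 :=
        (abs_sum_le_sum_abs _ _).trans (sum_le_sum fun j _ => hC j y h hh.ne')
    _ = (∑ j, C j) * h ^ 3 := by rw [← sum_mul, abs_of_pos hh]
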